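/- arXiv:2605.05070 — 2 statements merged into one kernel-verified Lean document; each statement's English description precedes it below -/
import Mathlib

section
/- A vector θ ∈ ℝ^{L^d} attains the global minimum -d·L^d of f1 if and only if there exists θ̄ ∈ ℝ such that θ_i ≡ θ̄ (mod 2π) for all i ∈ I. -/
/-!
Every cosine is at most `1`, so the energy is at least `-(1/2) ∑ᵢ #(N i) = -d Lᵈ`, with equality
iff `cos (θ i - θ j) = 1` on every bond, i.e. neighbouring angles agree modulo `2π`. Along the
connected neighbour graph this local agreement propagates to a single common angle.
-/

open Finset Real

theorem Real.cos_sub_eq_one_iff_coe_angle_eq (x y : ℝ) :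
    cos (x - y) = 1 ↔ (x : Angle) = y := by
  rw [← cos_zero, Angle.cos_eq_iff_coe_eq_or_eq_neg, Angle.coe_sub, Angle.coe_zero, neg_zero,
    or_self, sub_eq_zero]

theorem Real.Angle.coe_surjective : Function.Surjective ((↑) : ℝ → Angle) :=
  fun ψ => ψ.induction_on fun x => ⟨x, rfl⟩

theorem Finset.sum_cos_le_card {ι : Type*} (s : Finset ι) (f : ι → ℝ) :
    ∑ j ∈ s, cos (f j) ≤ #s := by
  simpa using sum_le_sum fun j (_ : j ∈ s) => cos_le_one (f j)

theorem Finset.sum_cos_eq_card_iff {ι : Type*} (s : Finset ι) (f : ι → ℝ) :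
    ∑ j ∈ s, cos (f j) = #s ↔ ∀ j ∈ s, cos (f j) = 1 := by
  rw [card_eq_sum_ones, Nat.cast_sum, Nat.cast_one]
  exact sum_eq_sum_iff_of_le fun j _ => cos_le_one _

theorem sum_sum_cos_sub_eq_sum_card_iff {ι : Type*} [Fintype ι] (N : ι → Finset ι)
    (θ : ι → ℝ) :
    ∑ i, ∑ j ∈ N i, cos (θ i - θ j) = ∑ i, (#(N i) : ℝ) ↔
      ∀ i, ∀ j ∈ N i, (θ i : Angle) = θ j := by
  rw [sum_eq_sum_iff_of_le fun i _ => sum_cos_le_card (N i) fun j => θ i - θ j]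
  simp only [mem_univ, true_implies, sum_cos_eq_card_iff, cos_sub_eq_one_iff_coe_angle_eq]

theorem Relation.exists_forall_eq_iff_of_forall_reflTransGen {ι α : Type*} [Nonempty α]
    {r : ι → ι → Prop} (hr : ∀ i j, ReflTransGen r i j) (g : ι → α) :
    (∃ c, ∀ i, g i = c) ↔ ∀ i j, r i j → g i = g j := by
  refine ⟨fun ⟨c, hc⟩ i j _ => (hc i).trans (hc j).symm, fun hg => ?_⟩
  rcases isEmpty_or_nonempty ι with hι | ⟨⟨i₀⟩⟩
  · exact ⟨Classical.arbitrary α, hι.elim⟩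
  · refine ⟨g i₀, fun i => ?_⟩
    have := (hr i₀ i).lift g hg
    rw [reflTransGen_eq_self] at this
    exact this.symm

theorem stmt_3_general (d L : ℕ)
    (N : Fin (L ^ d) → Finset (Fin (L ^ d)))
    (hcard : ∀ i, (N i).card = 2 * d)
    (hconn : ∀ i j : Fin (L ^ d), Relation.ReflTransGen (fun a b => b ∈ N a) i j)
    (θ : Fin (L ^ d) → ℝ) :
    (-(1 / 2 : ℝ) * ∑ i, ∑ j ∈ N i, Real.cos (θ i - θ j) = -((d : ℝ) * (L : ℝ) ^ d))
    ↔ ∃ θbar : ℝ, ∀ i, ∃ k : ℤ, θ i = θbar + 2 * Real.pi * k := by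
  have hsum : ∑ i, (#(N i) : ℝ) = 2 * (d * L ^ d) := by
    simp only [hcard, Nat.cast_mul, Nat.cast_ofNat, sum_const, card_univ, Fintype.card_fin,
      nsmul_eq_mul, Nat.cast_pow]
    ring
  have henergy : -(1 / 2 : ℝ) * ∑ i, ∑ j ∈ N i, cos (θ i - θ j) = -((d : ℝ) * (L : ℝ) ^ d) ↔
      ∑ i, ∑ j ∈ N i, cos (θ i - θ j) = ∑ i, (#(N i) : ℝ) := by
    rw [hsum]; constructor <;> intro h <;> linarith
  rw [henergy, sum_sum_cos_sub_eq_sum_card_iff,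
    ← Relation.exists_forall_eq_iff_of_forall_reflTransGen hconn fun i => (θ i : Angle),
    Angle.coe_surjective.exists]
  simp only [Angle.angle_eq_iff_two_pi_dvd_sub, sub_eq_iff_eq_add']

theorem stmt_3 (d L : ℕ) (hd : 0 < d) (hL : 0 < L)
    (N : Fin (L ^ d) → Finset (Fin (L ^ d)))
    (hcard : ∀ i, (N i).card = 2 * d)
    (hsym : ∀ i j, j ∈ N i ↔ i ∈ N j)
    (hconn : ∀ i j : Fin (L ^ d), Relation.ReflTransGen (fun a b => b ∈ N a) i j)
    (θ : Fin (L ^ d) → ℝ) :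
    (-(1 / 2 : ℝ) * ∑ i, ∑ j ∈ N i, Real.cos (θ i - θ j) = -((d : ℝ) * (L : ℝ) ^ d))
    ↔ ∃ θbar : ℝ, ∀ i, ∃ k : ℤ, θ i = θbar + 2 * Real.pi * k :=
  stmt_3_general d L N hcard hconn θ
end

section
/- Let ε > 0 with ε < 2 and 0 < Δ < d·ε/(2-ε). If θ^(1) is a global minimizer of f1 (so f1(θ^(1)) = -d·L^d), then θ^(1) is an ε-global minimizer of f = f1 + Δ·f2, i.e., (f(θ^(1)) - f_min)/|f_min| < ε, where f_min is the global minimum of f. -/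
theorem stmt_7 (d L : ℕ) (hd : 0 < d) (hL : 0 < L)
    (N : Fin (L ^ d) → Finset (Fin (L ^ d)))
    (hcard : ∀ i, (N i).card = 2 * d)
    (hsym : ∀ i j, j ∈ N i ↔ i ∈ N j)
    (φ : Fin (L ^ d) → ℝ) (Δ : ℝ) (hΔpos : 0 < Δ)
    (f : (Fin (L ^ d) → ℝ) → ℝ)
    (hf : ∀ θ, f θ = (-(1 / 2 : ℝ) * ∑ i, ∑ j ∈ N i, Real.cos (θ i - θ j)) +
      Δ * (-∑ i, Real.cos (θ i - φ i)))
    (fmin : ℝ) (θmin : Fin (L ^ d) → ℝ)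
    (hmin : f θmin = fmin) (hglob : ∀ θ, fmin ≤ f θ)
    (ε : ℝ) (hε : 0 < ε) (hε2 : ε < 2)
    (hΔ : Δ < d * ε / (2 - ε))
    (θ1 : Fin (L ^ d) → ℝ)
    (h1 : -(1 / 2 : ℝ) * ∑ i, ∑ j ∈ N i, Real.cos (θ1 i - θ1 j) =
      -((d : ℝ) * (L : ℝ) ^ d)) :
    (f θ1 - fmin) / |fmin| < ε := by
  set c : ℝ := (L : ℝ) ^ d with hc_def
  have hc : 0 < c := by positivity
  set A : ℝ := -∑ i, Real.cos (θ1 i - φ i) with hA_def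
  have hcardFin : (Fintype.card (Fin (L ^ d)) : ℝ) = c := by
    simp [hc_def]
  -- |A| ≤ c
  have hA_le : A ≤ c := by
    have : (-c : ℝ) ≤ ∑ i, Real.cos (θ1 i - φ i) := by
      calc (-c : ℝ) = ∑ _i : Fin (L ^ d), (-1 : ℝ) := by
            rw [Finset.sum_const, Finset.card_univ, nsmul_eq_mul, hcardFin]; ring
        _ ≤ ∑ i, Real.cos (θ1 i - φ i) :=
            Finset.sum_le_sum fun i _ => Real.neg_one_le_cos _
    linarith [this]
  -- bound on the pairwise sum for any θ
  have hpair : ∀ θ : Fin (L ^ d) → ℝ,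
      ∑ i, ∑ j ∈ N i, Real.cos (θ i - θ j) ≤ 2 * d * c := by
    intro θ
    calc ∑ i, ∑ j ∈ N i, Real.cos (θ i - θ j)
        ≤ ∑ i : Fin (L ^ d), ∑ _j ∈ N i, (1 : ℝ) :=
          Finset.sum_le_sum fun i _ => Finset.sum_le_sum fun j _ => Real.cos_le_one _
      _ = ∑ _i : Fin (L ^ d), (2 * d : ℝ) := by
          refine Finset.sum_congr rfl fun i _ => ?_
          rw [Finset.sum_const, hcard i, nsmul_eq_mul]; push_cast; ring
      _ = 2 * d * c := by
          rw [Finset.sum_const, Finset.card_univ, nsmul_eq_mul, hcardFin]; ring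
  have hsite : ∀ θ : Fin (L ^ d) → ℝ,
      ∑ i, Real.cos (θ i - φ i) ≤ c := by
    intro θ
    calc ∑ i, Real.cos (θ i - φ i)
        ≤ ∑ _i : Fin (L ^ d), (1 : ℝ) :=
          Finset.sum_le_sum fun i _ => Real.cos_le_one _
      _ = c := by
          rw [Finset.sum_const, Finset.card_univ, nsmul_eq_mul, hcardFin]; ring
  -- f θ1 = -d c + Δ A
  have hfθ1 : f θ1 = -(d : ℝ) * c + Δ * A := by
    rw [hf, h1, hA_def, hc_def]; ring
  -- fmin ≥ -(d+Δ) c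
  have hm1 : -((d : ℝ) + Δ) * c ≤ fmin := by
    rw [← hmin, hf]
    have h2 := hpair θmin
    have h3 := hsite θmin
    nlinarith [mul_le_mul_of_nonneg_left h3 hΔpos.le]
  -- fmin ≤ f (θ1 + π) = -d c - Δ A
  have hm0 : fmin ≤ -(d : ℝ) * c - Δ * A := by
    have key := hglob (fun i => θ1 i + Real.pi)
    rw [hf] at key
    have e1 : ∑ i, ∑ j ∈ N i, Real.cos ((θ1 i + Real.pi) - (θ1 j + Real.pi))
        = ∑ i, ∑ j ∈ N i, Real.cos (θ1 i - θ1 j) := by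
      refine Finset.sum_congr rfl fun i _ => Finset.sum_congr rfl fun j _ => ?_
      ring_nf
    have e2 : ∑ i, Real.cos ((θ1 i + Real.pi) - φ i)
        = -∑ i, Real.cos (θ1 i - φ i) := by
      rw [← Finset.sum_neg_distrib]
      refine Finset.sum_congr rfl fun i _ => ?_
      have : (θ1 i + Real.pi) - φ i = (θ1 i - φ i) + Real.pi := by ring
      rw [this, Real.cos_add_pi]
    rw [e1, e2] at key
    have : -(1 / 2 : ℝ) * ∑ i, ∑ j ∈ N i, Real.cos (θ1 i - θ1 j) = -(d : ℝ) * c := by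
      rw [h1, hc_def]; ring
    rw [this] at key
    calc fmin ≤ -(d : ℝ) * c + Δ * -(-∑ i, Real.cos (θ1 i - φ i)) := key
      _ = -(d : ℝ) * c - Δ * A := by rw [← hA_def]; ring
  -- fmin ≤ f θ1
  have hm2 : fmin ≤ -(d : ℝ) * c + Δ * A := by rw [← hfθ1]; exact hglob θ1
  have hfmin_neg : fmin < 0 := by nlinarith [hd, hc, (by exact_mod_cast hd : (0:ℝ) < (d:ℝ))]
  have hdpos : (0 : ℝ) < (d : ℝ) := by exact_mod_cast hd
  -- key inequality: Δ (2 - ε) < ε d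
  have hkey : Δ * (2 - ε) < ε * d := by
    have h2ε : (0 : ℝ) < 2 - ε := by linarith
    rw [div_eq_mul_inv] at hΔ
    have := (lt_div_iff₀ h2ε).mp (by rw [div_eq_mul_inv]; exact hΔ)
    linarith [this]
  rw [abs_of_neg hfmin_neg]
  rw [div_lt_iff₀ (by linarith : (0:ℝ) < -fmin)]
  -- goal : f θ1 - fmin < ε * -fmin
  rw [hfθ1]
  rcases le_or_gt ε 1 with hε1 | hε1
  · -- use fmin ≥ -(d+Δ)c, A ≤ c
    nlinarith [mul_nonneg (by linarith : (0:ℝ) ≤ 1 - ε) (by linarith : (0:ℝ) ≤ -fmin - 0),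
      mul_pos hΔpos hc, mul_nonneg hΔpos.le (by linarith : (0:ℝ) ≤ c - A)]
  · -- use fmin ≤ -dc - ΔA
    nlinarith [mul_nonneg (by linarith : (0:ℝ) ≤ ε - 1) (by linarith : (0:ℝ) ≤ (-(d:ℝ)*c - Δ*A) - fmin),
      mul_nonneg hΔpos.le (by linarith : (0:ℝ) ≤ c - A), mul_pos hdpos hc]
end
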